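/- arXiv:1907.02021 — 5 statements merged into one kernel-verified Lean document; each statement's English description precedes it below -/
import Mathlib

section
/- Let λ be a nonzero complex root of a monic polynomial with integer coefficients, and suppose all complex roots of this polynomial lie in the closed unit disc {z ∈ ℂ : |z| ≤ 1}. Then λ is a root of unity. -/
open Polynomial

theorem Polynomial.Monic.mahlerMeasure_eq_one {p : ℂ[X]} (hp : p.Monic)
    (hroots : ∀ z ∈ p.roots, ‖z‖ ≤ 1) : p.mahlerMeasure = 1 := by
  rw [mahlerMeasure_eq_leadingCoeff_mul_prod_roots, hp.leadingCoeff, norm_one, one_mul]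
  exact Multiset.prod_eq_one fun a ha => by
    obtain ⟨z, hz, rfl⟩ := Multiset.mem_map.1 ha
    exact max_eq_left (hroots z hz)

/-- Kronecker's theorem: a nonzero root of a monic integer polynomial all of whose
complex roots lie in the closed unit disc is a root of unity. -/
theorem kronecker_root_of_unity (p : Polynomial ℤ) (hp : p.Monic)
    (hroots : ∀ z : ℂ, Polynomial.aeval z p = 0 → ‖z‖ ≤ 1)
    (lam : ℂ) (hlam0 : lam ≠ 0) (hlam : Polynomial.aeval lam p = 0) :
    ∃ n : ℕ, 0 < n ∧ lam ^ n = 1 := by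
  have hp0 : p.map (Int.castRingHom ℂ) ≠ 0 := (hp.map _).ne_zero
  have hmahler : (p.map (Int.castRingHom ℂ)).mahlerMeasure = 1 :=
    (hp.map _).mahlerMeasure_eq_one fun z hz => hroots z <| by
      simpa [mem_roots hp0, eval_map, aeval_def] using hz
  exact pow_eq_one_of_mahlerMeasure_eq_one hmahler hlam0 (mem_aroots.2 ⟨hp.ne_zero, hlam⟩)
end

section
/- Let A be a real matrix that is block diagonal with 2×2 rotation blocks θ(a₁t₀), ..., θ(aₙt₀) (possibly preceded by an identity block). If A is conjugate over ℝ to an integer matrix, then A has finite order; moreover its order equals lcm of the orders of the rotation blocks. -/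
/-! `A` is orthogonal, so the entries of all its powers are bounded by `1`. Hence the powers of
the integer matrix `E = P⁻¹ A P` have uniformly bounded entries and take only finitely many
values; two equal powers of the invertible matrix `A` give `A ^ m = 1`. The order of a block
diagonal matrix is the lcm of the orders of its blocks. -/

open Real Matrix

/-- The rotation matrix by angle `t`. -/
noncomputable def rot (t : ℝ) : Matrix (Fin 2) (Fin 2) ℝ :=
  !![Real.cos t, Real.sin t; -Real.sin t, Real.cos t]

theorem IsUnit.isOfFinOrder_of_finite_range_pow {M : Type*} [Monoid M] {x : M}
    (hx : IsUnit x) (h : (Set.range (x ^ · : ℕ → M)).Finite) : IsOfFinOrder x := by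
  lift x to Mˣ using hx
  rw [Units.isOfFinOrder_val, ← finite_powers, Submonoid.coe_powers]
  refine (h.preimage Units.val_injective.injOn).subset ?_
  rintro _ ⟨n, rfl⟩
  exact ⟨n, by simp⟩

namespace Matrix

theorem finite_setOf_norm_apply_le {m n : Type*} [Fintype m] [Fintype n] (c : m → n → ℝ) :
    {M : Matrix m n ℤ | ∀ i j, ‖M i j‖ ≤ c i j}.Finite := by
  refine (Set.Finite.pi fun i => Set.Finite.pi fun j =>
    Set.finite_Icc (-⌈c i j⌉) ⌈c i j⌉).subset ?_
  intro M hM i _ j _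
  rw [Set.mem_Icc, ← abs_le, ← Int.cast_le (R := ℝ), Int.cast_abs, ← Int.norm_eq_abs]
  exact (hM i j).trans (Int.le_ceil _)

theorem norm_mul_mul_apply_le {l m n o α : Type*} [Fintype m] [Fintype n] [SeminormedRing α]
    (M : Matrix l m α) (B : Matrix m n α) (N : Matrix n o α) {c : ℝ}
    (hB : ∀ i j, ‖B i j‖ ≤ c) (i : l) (j : o) :
    ‖(M * B * N) i j‖ ≤ (∑ y, ‖M i y‖) * c * ∑ x, ‖N x j‖ := by
  calc ‖(M * B * N) i j‖ ≤ ∑ x, ∑ y, ‖M i y‖ * ‖B y x‖ * ‖N x j‖ := by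
        simp only [mul_apply, Finset.sum_mul]
        refine (norm_sum_le _ _).trans (Finset.sum_le_sum fun x _ => ?_)
        refine (norm_sum_le _ _).trans (Finset.sum_le_sum fun y _ => ?_)
        exact (norm_mul_le _ _).trans (by gcongr; exact norm_mul_le _ _)
    _ ≤ ∑ x, ∑ y, ‖M i y‖ * c * ‖N x j‖ := by gcongr with x _ y _; exact hB y x
    _ = (∑ y, ‖M i y‖) * c * ∑ x, ‖N x j‖ := by simp only [Finset.mul_sum, Finset.sum_mul]

section Conjugation

variable {ι 𝕜 : Type*} [Fintype ι] [DecidableEq ι] [RCLike 𝕜]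

theorem isOfFinOrder_of_conj_eq_map_intCast {A P : Matrix ι ι 𝕜} (hA : IsUnit A) {c : ℝ}
    (hA_pow : ∀ k i j, ‖(A ^ k) i j‖ ≤ c) (hP : IsUnit P) {E : Matrix ι ι ℤ}
    (hE : P⁻¹ * A * P = E.map (Int.cast : ℤ → 𝕜)) : IsOfFinOrder A := by
  lift P to (Matrix ι ι 𝕜)ˣ using hP
  have hE_pow (k : ℕ) : (E ^ k).map (Int.cast : ℤ → 𝕜) = (P : Matrix ι ι 𝕜)⁻¹ * A ^ k * P := by
    rw [← coe_units_inv, ← Units.conj_pow', coe_units_inv, hE]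
    exact map_pow (Int.castRingHom 𝕜).mapMatrix E k
  refine hA.isOfFinOrder_of_finite_range_pow ?_
  refine ((finite_setOf_norm_apply_le fun i j =>
      (∑ y, ‖(P : Matrix ι ι 𝕜)⁻¹ i y‖) * c * ∑ x, ‖(P : Matrix ι ι 𝕜) x j‖).image
    fun M : Matrix ι ι ℤ => (P : Matrix ι ι 𝕜) * M.map Int.cast * (P : Matrix ι ι 𝕜)⁻¹).subset ?_
  rintro _ ⟨k, rfl⟩
  refine ⟨E ^ k, fun i j => ?_, by simp [hE_pow, ← mul_assoc]⟩
  rw [Int.norm_eq_abs, ← RCLike.norm_ofReal (K := 𝕜), RCLike.ofReal_intCast,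
    ← map_apply (f := Int.cast), hE_pow]
  exact norm_mul_mul_apply_le _ _ _ (hA_pow k) i j

theorem isOfFinOrder_of_mem_unitaryGroup_of_conj_eq_map_intCast {A P : Matrix ι ι 𝕜}
    (hA : A ∈ unitaryGroup ι 𝕜) (hP : IsUnit P) {E : Matrix ι ι ℤ}
    (hE : P⁻¹ * A * P = E.map (Int.cast : ℤ → 𝕜)) : IsOfFinOrder A :=
  isOfFinOrder_of_conj_eq_map_intCast (Unitary.isUnit_coe (U := ⟨A, hA⟩))
    (fun k => entry_norm_bound_of_unitary (pow_mem hA k)) hP hE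

end Conjugation

section Blocks

variable {m n o α : Type*} [Fintype m] [DecidableEq m] [Fintype n] [DecidableEq n]
  [Fintype o] [DecidableEq o]

theorem fromBlocks_mem_unitaryGroup [CommRing α] [StarRing α] {A : Matrix m m α}
    {D : Matrix n n α} (hA : A ∈ unitaryGroup m α) (hD : D ∈ unitaryGroup n α) :
    fromBlocks A 0 0 D ∈ unitaryGroup (m ⊕ n) α := by
  rw [mem_unitaryGroup_iff, star_eq_conjTranspose] at hA hD ⊢
  simp [fromBlocks_conjTranspose, fromBlocks_multiply, ← fromBlocks_one, hA, hD]

theorem blockDiagonal_mem_unitaryGroup [CommRing α] [StarRing α] {M : o → Matrix m m α}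
    (hM : ∀ i, M i ∈ unitaryGroup m α) : blockDiagonal M ∈ unitaryGroup (m × o) α := by
  rw [mem_unitaryGroup_iff, star_eq_conjTranspose, blockDiagonal_conjTranspose,
    ← blockDiagonal_mul, ← blockDiagonal_one]
  exact congrArg blockDiagonal (funext fun i => mem_unitaryGroup_iff.mp (hM i))

theorem orderOf_fromBlocks_one [Semiring α] (D : Matrix n n α) :
    orderOf (fromBlocks (1 : Matrix m m α) 0 0 D) = orderOf D :=
  orderOf_eq_orderOf_iff.mpr fun k => by
    rw [fromBlocks_diagonal_pow, one_pow, ← fromBlocks_one, fromBlocks_inj]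
    simp

theorem orderOf_blockDiagonal [Semiring α] (M : o → Matrix m m α) :
    orderOf (blockDiagonal M) = Finset.univ.lcm fun i => orderOf (M i) := by
  rw [← Pi.orderOf]
  exact orderOf_injective (blockDiagonalRingHom m o α).toMonoidHom blockDiagonal_injective M

end Blocks

end Matrix

theorem rot_mem_orthogonalGroup (t : ℝ) : rot t ∈ orthogonalGroup (Fin 2) ℝ := by
  rw [mem_orthogonalGroup_iff]
  ext i j
  fin_cases i <;> fin_cases j <;> simp [rot, mul_apply, Fin.sum_univ_two, ← sq, mul_comm]

/-- A block diagonal matrix made of rotation blocks (possibly preceded by an identity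
block) which is conjugate over `ℝ` to an integer matrix has finite order, equal to the
lcm of the orders of the rotation blocks. -/
theorem blockdiag_rot_conj_int_finite_order (s n : ℕ) (a : Fin n → ℝ) (t₀ : ℝ)
    (A : Matrix (Fin s ⊕ Fin 2 × Fin n) (Fin s ⊕ Fin 2 × Fin n) ℝ)
    (hA : A = Matrix.fromBlocks 1 0 0 (Matrix.blockDiagonal fun i => rot (a i * t₀)))
    (hconj : ∃ P : Matrix (Fin s ⊕ Fin 2 × Fin n) (Fin s ⊕ Fin 2 × Fin n) ℝ, IsUnit P ∧
      ∃ E : Matrix (Fin s ⊕ Fin 2 × Fin n) (Fin s ⊕ Fin 2 × Fin n) ℤ,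
        P⁻¹ * A * P = E.map (Int.cast : ℤ → ℝ)) :
    IsOfFinOrder A ∧ orderOf A = Finset.univ.lcm (fun i => orderOf (rot (a i * t₀))) := by
  obtain ⟨P, hP, E, hE⟩ := hconj
  have hA_orth : A ∈ orthogonalGroup _ ℝ := hA ▸ fromBlocks_mem_unitaryGroup (one_mem _)
    (blockDiagonal_mem_unitaryGroup fun i => rot_mem_orthogonalGroup _)
  refine ⟨isOfFinOrder_of_mem_unitaryGroup_of_conj_eq_map_intCast hA_orth hP hE, ?_⟩
  rw [hA, orderOf_fromBlocks_one, orderOf_blockDiagonal]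
end

section
/- Let (𝔤, ⟨·,·⟩) be a metric Lie algebra whose Levi-Civita connection is flat, so that 𝔤 = 𝔷(𝔤) ⊕ 𝔟 ⊕ [𝔤,𝔤] orthogonally as in the Barberis–Dotti–Fino decomposition, with 𝔟 an abelian subalgebra, [𝔤,𝔤] abelian, and ad: 𝔟 → 𝔰𝔬([𝔤,𝔤]) injective. Then 𝔤 is almost abelian (has an abelian ideal of codimension 1) if and only if dim 𝔟 = 1. -/
/-- For a flat metric Lie algebra `𝔤` with its orthogonal Barberis–Dotti–Fino
decomposition `𝔤 = 𝔷(𝔤) ⊕ 𝔟 ⊕ [𝔤,𝔤]` (`𝔟` an abelian subalgebra, `[𝔤,𝔤]` abelian,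
`ad : 𝔟 → 𝔰𝔬([𝔤,𝔤])` injective and skew-adjoint w.r.t. the inner product `B`), `𝔤` is
almost abelian (non-abelian with an abelian ideal of codimension 1) if and only if
`dim 𝔟 = 1`. -/
theorem almost_abelian_iff_dim_b_eq_one
    (𝔤 : Type*) [LieRing 𝔤] [LieAlgebra ℝ 𝔤] [Module.Finite ℝ 𝔤]
    -- an inner product on 𝔤, given as a symmetric positive-definite bilinear form
    (B : LinearMap.BilinForm ℝ 𝔤)
    (hBsymm : ∀ x y : 𝔤, B x y = B y x)
    (hBpos : ∀ x : 𝔤, x ≠ 0 → 0 < B x x)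
    (b : LieSubalgebra ℝ 𝔤) (hb : IsLieAbelian b)
    (hcomm : IsLieAbelian (⁅(⊤ : LieIdeal ℝ 𝔤), (⊤ : LieIdeal ℝ 𝔤)⁆ : LieIdeal ℝ 𝔤))
    -- orthogonal direct sum 𝔤 = 𝔷(𝔤) ⊕ 𝔟 ⊕ [𝔤,𝔤]
    (hsum : (LieAlgebra.center ℝ 𝔤).toSubmodule ⊔ b.toSubmodule ⊔
      (⁅(⊤ : LieIdeal ℝ 𝔤), (⊤ : LieIdeal ℝ 𝔤)⁆ : LieIdeal ℝ 𝔤).toSubmodule = ⊤)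
    (horth₁ : ∀ x ∈ LieAlgebra.center ℝ 𝔤, ∀ y ∈ b, B x y = 0)
    (horth₂ : ∀ x ∈ LieAlgebra.center ℝ 𝔤,
      ∀ y ∈ (⁅(⊤ : LieIdeal ℝ 𝔤), (⊤ : LieIdeal ℝ 𝔤)⁆ : LieIdeal ℝ 𝔤), B x y = 0)
    (horth₃ : ∀ x ∈ b,
      ∀ y ∈ (⁅(⊤ : LieIdeal ℝ 𝔤), (⊤ : LieIdeal ℝ 𝔤)⁆ : LieIdeal ℝ 𝔤), B x y = 0)
    -- ad is skew-adjoint on 𝔟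
    (hskew : ∀ x ∈ b, ∀ y z : 𝔤, B ⁅x, y⁆ z = -B y ⁅x, z⁆)
    -- ad : 𝔟 → 𝔰𝔬([𝔤,𝔤]) is injective
    (hinj : ∀ x ∈ b,
      (∀ y ∈ (⁅(⊤ : LieIdeal ℝ 𝔤), (⊤ : LieIdeal ℝ 𝔤)⁆ : LieIdeal ℝ 𝔤), ⁅x, y⁆ = 0)
        → x = 0) :
    (¬ IsLieAbelian 𝔤 ∧ ∃ I : LieIdeal ℝ 𝔤, IsLieAbelian I ∧
      Module.finrank ℝ I + 1 = Module.finrank ℝ 𝔤)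
      ↔ Module.finrank ℝ b = 1 := by
  have hFD : FiniteDimensional ℝ 𝔤 := ‹Module.Finite ℝ 𝔤›
  set D : LieIdeal ℝ 𝔤 := ⁅(⊤ : LieIdeal ℝ 𝔤), (⊤ : LieIdeal ℝ 𝔤)⁆ with hDdef
  set Z : Submodule ℝ 𝔤 := (LieAlgebra.center ℝ 𝔤).toSubmodule with hZdef
  -- derived algebra is abelian on the level of elements
  have hDab : ∀ u ∈ D, ∀ v ∈ D, ⁅u, v⁆ = (0 : 𝔤) := by
    intro u hu v hv
    haveI := hcomm
    have h0 : (⁅(⟨u, hu⟩ : D), (⟨v, hv⟩ : D)⁆ : D) = 0 := trivial_lie_zero _ _ _ _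
    exact congrArg Subtype.val h0
  -- elements of the center bracket to zero (both sides)
  have hZab : ∀ z ∈ LieAlgebra.center ℝ 𝔤, ∀ w : 𝔤, ⁅z, w⁆ = 0 ∧ ⁅w, z⁆ = 0 := by
    intro z hz w
    refine ⟨?_, hz w⟩
    rw [← lie_skew, hz w, neg_zero]
  constructor
  · rintro ⟨hnab, I, hIab, hIdim⟩
    -- `b` is nontrivial, else 𝔤 = Z ⊔ D is abelian
    have hb0 : Module.finrank ℝ b ≠ 0 := by
      intro h0
      have hbbot : b.toSubmodule = ⊥ := Submodule.finrank_eq_zero.mp h0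
      apply hnab
      have htop : Z ⊔ D.toSubmodule = ⊤ := by
        rw [← hsum, hbbot, sup_bot_eq]
      constructor
      intro x y
      have hx : x ∈ Z ⊔ D.toSubmodule := htop ▸ Submodule.mem_top
      have hy : y ∈ Z ⊔ D.toSubmodule := htop ▸ Submodule.mem_top
      obtain ⟨z₁, hz₁, u₁, hu₁, rfl⟩ := Submodule.mem_sup.mp hx
      obtain ⟨z₂, hz₂, u₂, hu₂, rfl⟩ := Submodule.mem_sup.mp hy
      have hz₁' : z₁ ∈ LieAlgebra.center ℝ 𝔤 := hz₁
      have hz₂' : z₂ ∈ LieAlgebra.center ℝ 𝔤 := hz₂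
      have hu₁' : u₁ ∈ D := hu₁
      have hu₂' : u₂ ∈ D := hu₂
      rw [add_lie, lie_add, lie_add, (hZab z₁ hz₁' z₂).1, (hZab z₁ hz₁' u₂).1,
        (hZab z₂ hz₂' u₁).2, hDab u₁ hu₁' u₂ hu₂']
      simp
    -- `b` is at most one dimensional
    have hble : Module.finrank ℝ b ≤ 1 := by
      by_contra hgt
      push_neg at hgt
      -- find a nonzero element of b ⊓ I
      have hsum' := Submodule.finrank_sup_add_finrank_inf_eq b.toSubmodule I.toSubmodule
      have hle : Module.finrank ℝ ↥(b.toSubmodule ⊔ I.toSubmodule) ≤ Module.finrank ℝ 𝔤 :=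
        Submodule.finrank_le _
      have hIfr : Module.finrank ℝ I.toSubmodule + 1 = Module.finrank ℝ 𝔤 := hIdim
      have hbfr : Module.finrank ℝ b.toSubmodule = Module.finrank ℝ b := rfl
      have hinf0 : Module.finrank ℝ ↥(b.toSubmodule ⊓ I.toSubmodule) ≠ 0 := by omega
      have hinfne : b.toSubmodule ⊓ I.toSubmodule ≠ ⊥ := by
        intro hbot
        rw [hbot] at hinf0
        exact hinf0 (finrank_bot ℝ 𝔤)
      obtain ⟨x, hxmem, hxne⟩ := Submodule.exists_mem_ne_zero_of_ne_bot hinfne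
      have hxb : x ∈ b := hxmem.1
      have hxI : x ∈ I := hxmem.2
      -- I has codimension one, so contains the derived algebra
      have hInetop : I.toSubmodule ≠ ⊤ := by
        intro h
        have : Module.finrank ℝ I.toSubmodule = Module.finrank ℝ 𝔤 := by
          rw [h]; exact finrank_top ℝ 𝔤
        omega
      obtain ⟨x₀, hx₀⟩ : ∃ x₀ : 𝔤, x₀ ∉ I.toSubmodule := by
        by_contra h
        push_neg at h
        exact hInetop (Submodule.eq_top_iff'.mpr h)
      have hsuptop : I.toSubmodule ⊔ Submodule.span ℝ {x₀} = ⊤ := by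
        apply Submodule.eq_top_of_finrank_eq
        have hlt : I.toSubmodule < I.toSubmodule ⊔ Submodule.span ℝ {x₀} := by
          refine lt_of_le_of_ne le_sup_left ?_
          intro h
          exact hx₀ (h ▸ Submodule.mem_sup_right (Submodule.mem_span_singleton_self x₀))
        have h1 := Submodule.finrank_lt_finrank_of_lt hlt
        have h2 : Module.finrank ℝ ↥(I.toSubmodule ⊔ Submodule.span ℝ {x₀}) ≤
            Module.finrank ℝ 𝔤 := Submodule.finrank_le _
        omega
      have hDleI : D ≤ I := by
        rw [hDdef, LieSubmodule.lie_le_iff]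
        intro p _ q _
        have hp : p ∈ I.toSubmodule ⊔ Submodule.span ℝ {x₀} := hsuptop ▸ Submodule.mem_top
        have hq : q ∈ I.toSubmodule ⊔ Submodule.span ℝ {x₀} := hsuptop ▸ Submodule.mem_top
        obtain ⟨i, hi, p', hp', rfl⟩ := Submodule.mem_sup.mp hp
        obtain ⟨j, hj, q', hq', rfl⟩ := Submodule.mem_sup.mp hq
        obtain ⟨s, rfl⟩ := Submodule.mem_span_singleton.mp hp'
        obtain ⟨t, rfl⟩ := Submodule.mem_span_singleton.mp hq'
        have hij : ⁅i, j⁆ ∈ I := I.lie_mem hj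
        have hix : ⁅i, t • x₀⁆ ∈ I := by
          rw [← lie_skew]
          exact neg_mem (I.lie_mem hi)
        have hxj : ⁅s • x₀, j⁆ ∈ I := I.lie_mem hj
        have hxx : ⁅s • x₀, t • x₀⁆ = (0 : 𝔤) := by
          rw [smul_lie, lie_smul, lie_self]; simp
        rw [add_lie, lie_add, lie_add, hxx]
        exact add_mem (add_mem hij hix) (add_mem hxj (zero_mem _))
      -- but then x ∈ b ⊓ I is killed by hinj
      refine hxne (hinj x hxb ?_)
      intro y hy
      have hyI : y ∈ I := hDleI hy
      haveI := hIab
      have h0 : (⁅(⟨x, hxI⟩ : I), (⟨y, hyI⟩ : I)⁆ : I) = 0 := trivial_lie_zero _ _ _ _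
      exact congrArg Subtype.val h0
    omega
  · intro hb1
    -- the ideal Z ⊔ D
    have hIdeal : ∀ {x m : 𝔤}, m ∈ Z ⊔ D.toSubmodule → ⁅x, m⁆ ∈ Z ⊔ D.toSubmodule := by
      intro x m _
      exact Submodule.mem_sup_right <| LieSubmodule.lie_mem_lie (LieSubmodule.mem_top x) (LieSubmodule.mem_top m)
    refine ⟨?_, ⟨{ (Z ⊔ D.toSubmodule : Submodule ℝ 𝔤) with lie_mem := hIdeal }, ?_, ?_⟩⟩
    · -- 𝔤 is not abelian
      intro habs
      have hbbot : b.toSubmodule = ⊥ := by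
        rw [Submodule.eq_bot_iff]
        intro x hx
        exact hinj x hx (fun y _ => trivial_lie_zero _ _ _ _)
      have : Module.finrank ℝ b = 0 := by
        rw [show Module.finrank ℝ b = Module.finrank ℝ b.toSubmodule from rfl, hbbot]
        exact finrank_bot ℝ 𝔤
      omega
    · -- the ideal is abelian
      constructor
      rintro ⟨x, hx⟩ ⟨y, hy⟩
      apply Subtype.ext
      show ⁅x, y⁆ = (0 : 𝔤)
      obtain ⟨z₁, hz₁, u₁, hu₁, rfl⟩ := Submodule.mem_sup.mp hx
      obtain ⟨z₂, hz₂, u₂, hu₂, rfl⟩ := Submodule.mem_sup.mp hy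
      have hz₁' : z₁ ∈ LieAlgebra.center ℝ 𝔤 := hz₁
      have hz₂' : z₂ ∈ LieAlgebra.center ℝ 𝔤 := hz₂
      rw [add_lie, lie_add, lie_add, (hZab z₁ hz₁' z₂).1, (hZab z₁ hz₁' u₂).1,
        (hZab z₂ hz₂' u₁).2, hDab u₁ hu₁ u₂ hu₂]
      simp
    · -- codimension one
      have hbinf : b.toSubmodule ⊓ (Z ⊔ D.toSubmodule) = ⊥ := by
        rw [Submodule.eq_bot_iff]
        rintro x ⟨hxb, hxZD⟩
        by_contra hxne
        obtain ⟨z, hz, u, hu, rfl⟩ := Submodule.mem_sup.mp hxZD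
        have hzZ : z ∈ LieAlgebra.center ℝ 𝔤 := hz
        have hB : B (z + u) (z + u) = 0 := by
          have h1 : B (z + u) z = 0 := by
            rw [hBsymm]; exact horth₁ z hzZ _ hxb
          have h2 : B (z + u) u = 0 := horth₃ _ hxb u hu
          have := map_add (B (z + u)) z u
          rw [h1, h2] at this
          simpa using this
        exact absurd hB (ne_of_gt (hBpos _ hxne))
      have hsup' : b.toSubmodule ⊔ (Z ⊔ D.toSubmodule) = ⊤ := by
        rw [← hsum, ← sup_assoc, sup_comm b.toSubmodule Z]
      have h := Submodule.finrank_sup_add_finrank_inf_eq b.toSubmodule (Z ⊔ D.toSubmodule)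
      rw [hbinf, hsup'] at h
      have htop : Module.finrank ℝ (⊤ : Submodule ℝ 𝔤) = Module.finrank ℝ 𝔤 :=
        finrank_top ℝ 𝔤
      have hbot : Module.finrank ℝ (⊥ : Submodule ℝ 𝔤) = 0 := finrank_bot ℝ 𝔤
      have hbfr : Module.finrank ℝ b.toSubmodule = Module.finrank ℝ b := rfl
      show Module.finrank ℝ ↥(Z ⊔ D.toSubmodule) + 1 = Module.finrank ℝ 𝔤
      omega
end

section
/- Let Γ = t₀ℤ ⋉_φ PℤᵐΓ be a subgroup of the semidirect product ℝ ⋉_φ ℝᵐ where φ(t₀) has finite multiplicative order d > 1 and P ∈ GL(m,ℝ). Then Σ = dt₀ℤ ⋉_φ Pℤᵐ is the maximal normal abelian subgroup of Γ, and Γ/Σ ≅ ℤ_d. -/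
/-! Write elements of `Γ` as `(Pv, t₀k)`. Since `φ(t₀)` has order `d`, elements with `d ∣ k` act
trivially, so `Σ` is abelian; and `Σ` is the preimage in `Γ` of `dt₀ℤ` under the projection to `ℝ`,
hence normal with `Γ/Σ ≅ t₀ℤ/dt₀ℤ ≅ ℤ/d`.

For maximality let `x = (u, t₀k)` lie in a normal abelian `Λ ≤ Γ` and let `B` be the matrix of
`φ(t₀k)`. For `w ∈ Pℤᵐ`, `x` commutes with its conjugate by `(w, 0)`, which says `(B - 1)² w = 0`;
as `Pℤᵐ` spans `ℝᵐ`, `(B - 1)² = 0`. Then `B ^ n = 1 + n (B - 1)`, so `B ^ d = 1` forces `B = 1`,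
i.e. `φ(t₀) ^ k = 1` and `d ∣ k`. -/

open Matrix

theorem eq_one_of_sub_one_sq_eq_zero_of_pow_eq_one {R : Type*} [Ring R] [IsAddTorsionFree R]
    {b : R} {d : ℕ} (hd : d ≠ 0) (hsq : (b - 1) ^ 2 = 0) (hpow : b ^ d = 1) : b = 1 := by
  obtain ⟨a, rfl⟩ : ∃ a, b = 1 + a := ⟨b - 1, by abel⟩
  rw [add_sub_cancel_left] at hsq
  have hpow_eq : ∀ n : ℕ, (1 + a) ^ n = 1 + n • a := by
    intro n
    induction n with
    | zero => simp
    | succ n ih =>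
      rw [pow_succ, ih, succ_nsmul, add_mul, one_mul, mul_add, mul_one, smul_mul_assoc,
        ← sq, hsq, smul_zero]
      abel
  have hnsmul : d • a = 0 := by simpa [hpow] using (hpow_eq d).symm
  simp [(smul_eq_zero.1 hnsmul).resolve_left hd]

theorem Matrix.eq_zero_of_mulVec_intCast_eq_zero {m n R : Type*} [Fintype n] [DecidableEq n]
    [Ring R] {A : Matrix m n R} (h : ∀ v : n → ℤ, A *ᵥ (fun i => (v i : R)) = 0) : A = 0 := by
  ext i j
  simpa [mulVec, dotProduct, Pi.single_apply] using congrFun (h (Pi.single j 1)) i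

instance Matrix.instIsAddTorsionFree {m n R : Type*} [AddMonoid R] [IsAddTorsionFree R] :
    IsAddTorsionFree (Matrix m n R) :=
  inferInstanceAs (IsAddTorsionFree (m → n → R))

namespace MulAut

variable {n R : Type*} [Fintype n] [DecidableEq n] [Semiring R]
  {α : MulAut (Multiplicative (n → R))} {A : Matrix n n R}

theorem pow_apply_ofAdd_of_mulVec (hα : ∀ v, α (.ofAdd v) = .ofAdd (A *ᵥ v)) (k : ℕ)
    (v : n → R) : (α ^ k) (.ofAdd v) = .ofAdd ((A ^ k) *ᵥ v) := by
  induction k generalizing v with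
  | zero => simp
  | succ k ih => rw [pow_succ, mul_apply, hα, ih, mulVec_mulVec, ← pow_succ]

theorem orderOf_eq_of_mulVec (hα : ∀ v, α (.ofAdd v) = .ofAdd (A *ᵥ v)) :
    orderOf α = orderOf A := by
  refine orderOf_eq_orderOf_iff.2 fun k => ?_
  rw [MulEquiv.ext_iff, ext_iff_mulVec]
  refine ⟨fun h v => ?_, fun h x => ?_⟩
  · simpa [pow_apply_ofAdd_of_mulVec hα] using h (.ofAdd v)
  · rw [← ofAdd_toAdd x, pow_apply_ofAdd_of_mulVec hα, h, one_apply, one_mulVec]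

end MulAut

namespace SemidirectProduct

variable {N G : Type*} [CommGroup N]

theorem commute_of_map_right_eq_one [CommGroup G] {φ : G →* MulAut N}
    {a b : N ⋊[φ] G} (ha : φ a.right = 1) (hb : φ b.right = 1) : Commute a b := by
  ext
  · simp [ha, hb, mul_comm]
  · exact mul_comm _ _

theorem commute_conj_inl_iff [Group G] {φ : G →* MulAut N} (x : N ⋊[φ] G) (w : N) :
    Commute x (inl w * x * (inl w)⁻¹) ↔ w * φ x.right (φ x.right w) = φ x.right w ^ 2 := by
  simp only [Commute, SemiconjBy, SemidirectProduct.ext_iff, mul_left, mul_right, inv_left,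
    inv_right, left_inl, right_inl, map_one, one_mul, mul_one, inv_one, MulAut.one_apply,
    map_mul, map_inv, and_true]
  set β := φ x.right
  have e1 : x.left * (β w * β x.left * (β (β w))⁻¹) = x.left * β x.left * (β w / β (β w)) := by
    rw [div_eq_mul_inv]; ac_rfl
  have e2 : w * x.left * (β w)⁻¹ * β x.left = x.left * β x.left * (w / β w) := by
    rw [div_eq_mul_inv]; ac_rfl
  rw [e1, e2, mul_right_inj, div_eq_div_iff_mul_eq_mul, sq, eq_comm]

end SemidirectProduct

theorem zpow_mem_zpowers_pow_iff_of_not_isOfFinOrder {G : Type*} [Group G] {g : G}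
    (hg : ¬IsOfFinOrder g) (d : ℕ) (k : ℤ) : g ^ k ∈ Subgroup.zpowers (g ^ d) ↔ (d : ℤ) ∣ k := by
  refine Subgroup.mem_zpowers_iff.trans (exists_congr fun j => ?_)
  rw [← zpow_natCast, ← _root_.zpow_mul, (injective_zpow_iff_not_isOfFinOrder.2 hg).eq_iff,
    eq_comm]

open SemidirectProduct Subgroup

section MatrixAction

variable {n R H : Type*} [Fintype n] [DecidableEq n]

theorem map_zpow_eq_one_iff_orderOf_dvd [Semiring R] [Group H]
    {φ : H →* MulAut (Multiplicative (n → R))} {τ : H} {A : Matrix n n R}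
    (hα : ∀ v, φ τ (.ofAdd v) = .ofAdd (A *ᵥ v)) (k : ℤ) :
    φ (τ ^ k) = 1 ↔ (orderOf A : ℤ) ∣ k := by
  rw [map_zpow, ← orderOf_dvd_iff_zpow_eq_one, MulAut.orderOf_eq_of_mulVec hα]

theorem commute_of_right_mem_zpowers_pow_orderOf [Ring R] [CommGroup H]
    {φ : H →* MulAut (Multiplicative (n → R))} {τ : H} {A : Matrix n n R}
    (hα : ∀ v, φ τ (.ofAdd v) = .ofAdd (A *ᵥ v)) {a b : Multiplicative (n → R) ⋊[φ] H}
    (ha : a.right ∈ zpowers (τ ^ orderOf A)) (hb : b.right ∈ zpowers (τ ^ orderOf A)) :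
    Commute a b := by
  have htriv : ∀ h ∈ zpowers (τ ^ orderOf A), φ h = 1 := by
    intro h hh
    obtain ⟨k, rfl⟩ := mem_zpowers_iff.1 hh
    rw [← zpow_natCast, ← _root_.zpow_mul]
    exact (map_zpow_eq_one_iff_orderOf_dvd hα _).2 (dvd_mul_right _ _)
  exact commute_of_map_right_eq_one (htriv _ ha) (htriv _ hb)

theorem sq_sub_one_mulVec_eq_zero_of_commute_conj [CommRing R] [Group H]
    {φ : H →* MulAut (Multiplicative (n → R))} {x : Multiplicative (n → R) ⋊[φ] H}
    {B : Matrix n n R} (hB : ∀ v, φ x.right (.ofAdd v) = .ofAdd (B *ᵥ v)) {w : n → R}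
    (hw : Commute x (inl (.ofAdd w) * x * (inl (.ofAdd w))⁻¹)) : (B - 1) ^ 2 *ᵥ w = 0 := by
  have h := congrArg Multiplicative.toAdd ((commute_conj_inl_iff x _).1 hw)
  simp only [hB, toAdd_mul, toAdd_pow, toAdd_ofAdd] at h
  calc (B - 1) ^ 2 *ᵥ w = (w + B *ᵥ B *ᵥ w) - 2 • B *ᵥ w := by
        simp only [sq, sub_mul, mul_sub, mul_one, one_mul, sub_mulVec, ← mulVec_mulVec, one_mulVec]
        abel
    _ = 0 := by rw [h, sub_self]

theorem le_inf_comap_rightHom_of_normal_of_commute [CommRing R] [IsAddTorsionFree R] [Group H]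
    {φ : H →* MulAut (Multiplicative (n → R))} {τ : H} {A P : Matrix n n R}
    (hα : ∀ v, φ τ (.ofAdd v) = .ofAdd (A *ᵥ v)) (hA : orderOf A ≠ 0) (hP : IsUnit P)
    {Γ Λ : Subgroup (Multiplicative (n → R) ⋊[φ] H)} (hΓ : Γ.map rightHom ≤ zpowers τ)
    (hΓP : ∀ v : n → ℤ, inl (.ofAdd (P *ᵥ (v ·))) ∈ Γ) (hΛΓ : Λ ≤ Γ)
    (hΛ : (Λ.subgroupOf Γ).Normal) (hcomm : ∀ a ∈ Λ, ∀ b ∈ Λ, a * b = b * a) :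
    Λ ≤ Γ ⊓ (zpowers (τ ^ orderOf A)).comap rightHom := by
  intro x hx
  refine ⟨hΛΓ hx, ?_⟩
  obtain ⟨k, hk⟩ : ∃ k : ℤ, τ ^ k = x.right := hΓ (mem_map_of_mem rightHom (hΛΓ hx))
  have hfin : IsOfFinOrder (φ τ) := by
    rw [← orderOf_pos_iff, MulAut.orderOf_eq_of_mulVec hα]; exact Nat.pos_of_ne_zero hA
  obtain ⟨j, hj⟩ : φ x.right ∈ Submonoid.powers (φ τ) :=
    hfin.mem_powers_iff_mem_zpowers.2 ⟨k, by rw [← hk, map_zpow]⟩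
  have hB : ∀ v, φ x.right (.ofAdd v) = .ofAdd (A ^ j *ᵥ v) := by
    rw [← hj]; exact MulAut.pow_apply_ofAdd_of_mulVec hα j
  have hsq : (A ^ j - 1) ^ 2 * P = 0 := eq_zero_of_mulVec_intCast_eq_zero fun v => by
    rw [← mulVec_mulVec]
    exact sq_sub_one_mulVec_eq_zero_of_commute_conj hB
      (hcomm x hx _ (hΛ.conj_mem ⟨x, hΛΓ hx⟩ hx ⟨_, hΓP v⟩))
  have hAj : A ^ j = 1 := eq_one_of_sub_one_sq_eq_zero_of_pow_eq_one hA
    (hP.mul_left_eq_zero.1 hsq) (by rw [← pow_mul, mul_comm, pow_mul, pow_orderOf_eq_one, one_pow])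
  have hx1 : φ (τ ^ k) = 1 := by
    ext y
    rw [hk, ← ofAdd_toAdd y, hB, hAj, one_mulVec, MulAut.one_apply]
  obtain ⟨i, rfl⟩ := (map_zpow_eq_one_iff_orderOf_dvd hα k).1 hx1
  exact ⟨i, (by rw [← zpow_natCast, ← _root_.zpow_mul, hk] : (τ ^ orderOf A) ^ i = x.right)⟩

end MatrixAction

theorem nonempty_quotient_inf_comap_mulEquiv_zmod {E H : Type*} [Group E] [Group H] (f : E →* H)
    {Γ : Subgroup E} {τ : H} (hΓ : Γ.map f = zpowers τ) (hτ : ¬IsOfFinOrder τ) (d : ℕ)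
    [((Γ ⊓ (zpowers (τ ^ d)).comap f).subgroupOf Γ).Normal] :
    Nonempty ((Γ ⧸ (Γ ⊓ (zpowers (τ ^ d)).comap f).subgroupOf Γ) ≃* Multiplicative (ZMod d)) := by
  obtain ⟨g, hg, rfl⟩ : τ ∈ Γ.map f := hΓ ▸ mem_zpowers τ
  set q : Γ ⧸ (Γ ⊓ (zpowers (f g ^ d)).comap f).subgroupOf Γ := QuotientGroup.mk ⟨g, hg⟩
    with hq_def
  have hgen : ∀ y, y ∈ zpowers q := by
    intro y
    induction y using QuotientGroup.induction_on with | H x => ?_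
    obtain ⟨k, hk⟩ := mem_zpowers_iff.1 (hΓ ▸ mem_map_of_mem f x.2)
    refine mem_zpowers_iff.2 ⟨k, ?_⟩
    rw [hq_def, ← QuotientGroup.mk_zpow, QuotientGroup.eq, mem_subgroupOf]
    refine ⟨(((⟨g, hg⟩ : Γ) ^ k)⁻¹ * x).2, ?_⟩
    simp [hk]
  have hq : orderOf q = d := by
    have hpow : ∀ k : ℕ, q ^ k = 1 ↔ d ∣ k := by
      intro k
      rw [hq_def, ← QuotientGroup.mk_pow, QuotientGroup.eq_one_iff, mem_subgroupOf]
      simp only [mem_inf, mem_comap, SubgroupClass.coe_pow, map_pow]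
      rw [← zpow_natCast (f g) k, zpow_mem_zpowers_pow_iff_of_not_isOfFinOrder hτ,
        Int.natCast_dvd_natCast]
      exact and_iff_right (pow_mem hg k)
    exact Nat.dvd_antisymm (orderOf_dvd_iff_pow_eq_one.2 ((hpow d).2 dvd_rfl))
      ((hpow _).1 (pow_orderOf_eq_one q))
  exact ⟨(zmodMulEquivOfGenerator hgen
    ((orderOf_eq_card_of_forall_mem_zpowers hgen).symm.trans hq)).symm⟩

theorem ofAdd_mul_intCast {α : Type*} [Ring α] (t : α) (k : ℤ) :
    Multiplicative.ofAdd (t * k) = .ofAdd t ^ k := by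
  rw [← ofAdd_zsmul, zsmul_eq_mul, Int.cast_comm]

theorem eq_inf_comap_rightHom {m : ℕ}
    {φ : Multiplicative ℝ →* MulAut (Multiplicative (Fin m → ℝ))} {t₀ : ℝ} {d : ℕ}
    {P : Matrix (Fin m) (Fin m) ℝ}
    {Γ S : Subgroup (Multiplicative (Fin m → ℝ) ⋊[φ] Multiplicative ℝ)}
    (hΓ : ∀ x, x ∈ Γ ↔ ∃ (k : ℤ) (v : Fin m → ℤ),
      x.right = Multiplicative.ofAdd (t₀ * k) ∧
      x.left = Multiplicative.ofAdd (P.mulVec (fun i => (v i : ℝ))))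
    (hS : ∀ x, x ∈ S ↔ ∃ (k : ℤ) (v : Fin m → ℤ),
      x.right = Multiplicative.ofAdd (t₀ * (d * k)) ∧
      x.left = Multiplicative.ofAdd (P.mulVec (fun i => (v i : ℝ)))) :
    S = Γ ⊓ (zpowers (.ofAdd t₀ ^ d)).comap rightHom := by
  have hpow (k : ℤ) : (Multiplicative.ofAdd t₀ ^ d) ^ k = .ofAdd (t₀ * (d * k)) := by
    rw [← zpow_natCast, ← _root_.zpow_mul, ← ofAdd_mul_intCast]
    push_cast
    rfl
  ext x
  simp only [hS, mem_inf, hΓ, mem_comap, mem_zpowers_iff, hpow, rightHom_eq_right]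
  constructor
  · rintro ⟨k, v, hk, hv⟩
    exact ⟨⟨d * k, v, by rw [hk]; push_cast; rfl, hv⟩, k, hk.symm⟩
  · rintro ⟨⟨-, v, -, hv⟩, k, hk⟩
    exact ⟨k, v, hk.symm, hv⟩

/-- In `G = ℝ ⋉_φ ℝᵐ`, if `Γ = t₀ℤ ⋉_φ Pℤᵐ` where `φ(t₀)` acts by a matrix `M t₀` of
finite multiplicative order `d > 1` and `P ∈ GL(m,ℝ)`, then `Σ = dt₀ℤ ⋉_φ Pℤᵐ` is the
maximal normal abelian subgroup of `Γ` and `Γ/Σ ≅ ℤ_d`. -/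
theorem maximal_abelian_and_quotient (m : ℕ) (t₀ : ℝ) (ht₀ : t₀ ≠ 0)
    (M : ℝ → Matrix (Fin m) (Fin m) ℝ)
    (φ : Multiplicative ℝ →* MulAut (Multiplicative (Fin m → ℝ)))
    (hφ : ∀ (t : ℝ) (v : Fin m → ℝ),
      φ (Multiplicative.ofAdd t) (Multiplicative.ofAdd v)
        = Multiplicative.ofAdd ((M t).mulVec v))
    (d : ℕ) (hd : 1 < d) (hord : orderOf (M t₀) = d)
    (P : Matrix (Fin m) (Fin m) ℝ) (hP : IsUnit P)
    (Γ S : Subgroup (SemidirectProduct (Multiplicative (Fin m → ℝ)) (Multiplicative ℝ) φ))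
    (hΓ : ∀ x, x ∈ Γ ↔ ∃ (k : ℤ) (v : Fin m → ℤ),
      x.right = Multiplicative.ofAdd (t₀ * k) ∧
      x.left = Multiplicative.ofAdd (P.mulVec (fun i => (v i : ℝ))))
    (hS : ∀ x, x ∈ S ↔ ∃ (k : ℤ) (v : Fin m → ℤ),
      x.right = Multiplicative.ofAdd (t₀ * (d * k)) ∧
      x.left = Multiplicative.ofAdd (P.mulVec (fun i => (v i : ℝ)))) :
    S ≤ Γ ∧ (S.subgroupOf Γ).Normal ∧ (∀ a ∈ S, ∀ b ∈ S, a * b = b * a) ∧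
    (∀ Λ : Subgroup (SemidirectProduct (Multiplicative (Fin m → ℝ)) (Multiplicative ℝ) φ),
      Λ ≤ Γ → (Λ.subgroupOf Γ).Normal → (∀ a ∈ Λ, ∀ b ∈ Λ, a * b = b * a) → Λ ≤ S) ∧
    ∀ _ : (S.subgroupOf Γ).Normal, Nonempty ((Γ ⧸ S.subgroupOf Γ) ≃* Multiplicative (ZMod d)) := by
  have hΓ_map : Γ.map rightHom = zpowers (.ofAdd t₀) := by
    refine le_antisymm ?_ (zpowers_le.2 ⟨inr (.ofAdd t₀), (hΓ _).2 ⟨1, 0, by simp, ?_⟩, rfl⟩)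
    · rintro _ ⟨x, hx, rfl⟩
      obtain ⟨k, -, hk, -⟩ := (hΓ x).1 hx
      exact ⟨k, (ofAdd_mul_intCast t₀ k).symm.trans hk.symm⟩
    · simp [← Pi.zero_def]
  have ht₀_infinite : ¬IsOfFinOrder (Multiplicative.ofAdd t₀) := by
    rwa [isOfFinOrder_iff_eq_one, ofAdd_eq_one]
  obtain rfl := eq_inf_comap_rightHom hΓ hS
  subst hord
  refine ⟨inf_le_left, ?_,
    fun a ha b hb => commute_of_right_mem_zpowers_pow_orderOf (hφ t₀) ha.2 hb.2,
    fun Λ => le_inf_comap_rightHom_of_normal_of_commute (hφ t₀) (by omega) hP hΓ_map.le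
      (fun v => (hΓ _).2 ⟨0, v, by simp, rfl⟩),
    fun _ => nonempty_quotient_inf_comap_mulEquiv_zmod rightHom hΓ_map ht₀_infinite _⟩
  rw [inf_subgroupOf_left]
  exact ((normal_of_isMulCommutative _).comap _).subgroupOf Γ
end

section
/- Let A = θ(at₀) ⊕ θ(bt₀) be the 4×4 block diagonal matrix of two rotation blocks, a ≥ b > 0, t₀ ≠ 0. If A is conjugate over ℝ to an integer matrix, then with x = cos(at₀), y = cos(bt₀) there exist integers m, n with 2(x+y) = m and 4xy = n, and hence {x, y} = {(m ± √(m²−4n))/4}, with |m| ≤ 4 and 0 ≤ √(m²−4n) ≤ min(4−m, 4+m). -/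
open Real Matrix

lemma trace_sq_parity (n : Type*) [Fintype n] [DecidableEq n] (E : Matrix n n ℤ) :
    (2:ℤ) ∣ E.trace ^ 2 - (E * E).trace := by
  have := ZMod.trace_pow_card (p := 2) ((Int.castRingHom (ZMod 2)).mapMatrix E)
  rw [show (2:ℤ) = ((2:ℕ):ℤ) by norm_num, ← ZMod.intCast_zmod_eq_zero_iff_dvd]
  push_cast
  have h1 : ((E.trace : ZMod 2)) = Matrix.trace ((Int.castRingHom (ZMod 2)).mapMatrix E) :=
    AddMonoidHom.map_trace (Int.castRingHom (ZMod 2)) E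
  have h2 : (((E*E).trace : ZMod 2)) = Matrix.trace ((Int.castRingHom (ZMod 2)).mapMatrix (E*E)) :=
    AddMonoidHom.map_trace (Int.castRingHom (ZMod 2)) (E*E)
  rw [h1, h2, _root_.map_mul, ← sq, this, sub_self]

/-- If the 4×4 block diagonal matrix `θ(at₀) ⊕ θ(bt₀)` (`a ≥ b > 0`, `t₀ ≠ 0`) is
conjugate over `ℝ` to an integer matrix, then with `x = cos(at₀)`, `y = cos(bt₀)` there
are integers `m, n` with `2(x+y) = m`, `4xy = n`, `{x, y} = {(m ± √(m²−4n))/4}`,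
`|m| ≤ 4` and `0 ≤ √(m²−4n) ≤ min(4−m, 4+m)`. -/
theorem rot_sum_conj_int (a b t₀ : ℝ) (hab : a ≥ b) (hb : b > 0) (ht₀ : t₀ ≠ 0)
    (A : Matrix (Fin 2 ⊕ Fin 2) (Fin 2 ⊕ Fin 2) ℝ)
    (hA : A = Matrix.fromBlocks (rot (a * t₀)) 0 0 (rot (b * t₀)))
    (hconj : ∃ P : Matrix (Fin 2 ⊕ Fin 2) (Fin 2 ⊕ Fin 2) ℝ, IsUnit P ∧
      ∃ E : Matrix (Fin 2 ⊕ Fin 2) (Fin 2 ⊕ Fin 2) ℤ,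
        P⁻¹ * A * P = E.map (Int.cast : ℤ → ℝ)) :
    ∃ m n : ℤ,
      2 * (Real.cos (a * t₀) + Real.cos (b * t₀)) = (m : ℝ) ∧
      4 * (Real.cos (a * t₀) * Real.cos (b * t₀)) = (n : ℝ) ∧
      ((Real.cos (a * t₀) = ((m : ℝ) + Real.sqrt ((m : ℝ) ^ 2 - 4 * n)) / 4 ∧
        Real.cos (b * t₀) = ((m : ℝ) - Real.sqrt ((m : ℝ) ^ 2 - 4 * n)) / 4) ∨
       (Real.cos (a * t₀) = ((m : ℝ) - Real.sqrt ((m : ℝ) ^ 2 - 4 * n)) / 4 ∧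
        Real.cos (b * t₀) = ((m : ℝ) + Real.sqrt ((m : ℝ) ^ 2 - 4 * n)) / 4)) ∧
      |(m : ℝ)| ≤ 4 ∧
      0 ≤ Real.sqrt ((m : ℝ) ^ 2 - 4 * n) ∧
      Real.sqrt ((m : ℝ) ^ 2 - 4 * n) ≤ min (4 - (m : ℝ)) (4 + (m : ℝ)) := by
  obtain ⟨P, hP, E, hE⟩ := hconj
  set x := Real.cos (a * t₀) with hxdef
  set y := Real.cos (b * t₀) with hydef
  have hPinv : P * P⁻¹ = 1 := Matrix.mul_nonsing_inv P ((Matrix.isUnit_iff_isUnit_det P).mp hP)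
  have tA : A.trace = 2 * x + 2 * y := by
    rw [hA]
    simp [Matrix.trace, Fintype.sum_sum_type, Matrix.fromBlocks, rot, Matrix.diag]
    ring
  have tA2 : (A * A).trace = 4 * x ^ 2 + 4 * y ^ 2 - 4 := by
    rw [hA, Matrix.fromBlocks_multiply]
    simp [Matrix.trace, Fintype.sum_sum_type, Matrix.fromBlocks, rot, Matrix.diag,
      Matrix.mul_fin_two]
    nlinarith [Real.sin_sq_add_cos_sq (a * t₀), Real.sin_sq_add_cos_sq (b * t₀)]
  have hconjtr : (P⁻¹ * A * P).trace = A.trace := by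
    rw [Matrix.trace_mul_comm, ← Matrix.mul_assoc, hPinv, Matrix.one_mul]
  have hsq : (P⁻¹ * A * P) * (P⁻¹ * A * P) = P⁻¹ * (A * A) * P := by
    rw [show (P⁻¹ * A * P) * (P⁻¹ * A * P) = P⁻¹ * A * (P * P⁻¹) * (A * P) by
      simp only [Matrix.mul_assoc], hPinv]
    simp [Matrix.mul_assoc]
  have hconjtr2 : (P⁻¹ * (A * A) * P).trace = (A * A).trace := by
    rw [Matrix.trace_mul_comm, ← Matrix.mul_assoc, hPinv, Matrix.one_mul]
  have htrE : ((E.trace : ℝ)) = 2 * x + 2 * y := by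
    have h1 : ((E.trace : ℝ)) = Matrix.trace ((Int.castRingHom ℝ).mapMatrix E) :=
      AddMonoidHom.map_trace (Int.castRingHom ℝ) E
    rw [h1, RingHom.mapMatrix_apply]
    rw [show E.map (Int.castRingHom ℝ) = E.map (Int.cast : ℤ → ℝ) from rfl, ← hE, hconjtr, tA]
  have htrE2 : (((E * E).trace : ℝ)) = 4 * x ^ 2 + 4 * y ^ 2 - 4 := by
    have h1 : (((E * E).trace : ℝ)) = Matrix.trace ((Int.castRingHom ℝ).mapMatrix (E * E)) :=
      AddMonoidHom.map_trace (Int.castRingHom ℝ) (E * E)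
    rw [h1, _root_.map_mul, RingHom.mapMatrix_apply]
    rw [show E.map (Int.castRingHom ℝ) = E.map (Int.cast : ℤ → ℝ) from rfl, ← hE, hsq,
      hconjtr2, tA2]
  obtain ⟨k, hk⟩ := trace_sq_parity _ E
  have hkr : ((E.trace : ℝ)) ^ 2 - ((E * E).trace : ℝ) = 2 * (k : ℝ) := by exact_mod_cast hk
  have hm : 2 * (x + y) = ((E.trace : ℝ)) := by linarith [htrE]
  have hn : 4 * (x * y) = (((k - 2 : ℤ)) : ℝ) := by
    push_cast
    have hsqE : ((E.trace : ℝ)) ^ 2 = (2 * x + 2 * y) ^ 2 := by rw [htrE]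
    nlinarith [hkr, htrE2, hsqE]
  have hx1 : x ≤ 1 := Real.cos_le_one _
  have hx2 : -1 ≤ x := Real.neg_one_le_cos _
  have hy1 : y ≤ 1 := Real.cos_le_one _
  have hy2 : -1 ≤ y := Real.neg_one_le_cos _
  have hD : ((E.trace : ℝ)) ^ 2 - 4 * (((k - 2 : ℤ)) : ℝ) = (2 * (x - y)) ^ 2 := by
    linear_combination (-((E.trace : ℝ) + 2 * (x + y))) * hm + 4 * hn
  have hsqrt : Real.sqrt (((E.trace : ℝ)) ^ 2 - 4 * (((k - 2 : ℤ)) : ℝ)) = 2 * |x - y| := by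
    rw [hD, Real.sqrt_sq_eq_abs, abs_mul]
    norm_num
  have habs1 : |x - y| ≤ 2 - x - y := abs_le.mpr ⟨by linarith, by linarith⟩
  have habs2 : |x - y| ≤ 2 + x + y := abs_le.mpr ⟨by linarith, by linarith⟩
  refine ⟨E.trace, k - 2, hm, hn, ?_, ?_, Real.sqrt_nonneg _, ?_⟩
  · rcases le_total y x with h | h
    · left
      rw [hsqrt, abs_of_nonneg (by linarith : (0:ℝ) ≤ x - y)]
      exact ⟨by linarith, by linarith⟩
    · right
      rw [hsqrt, abs_of_nonpos (by linarith : x - y ≤ (0:ℝ))]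
      exact ⟨by linarith, by linarith⟩
  · rw [abs_le]
    exact ⟨by linarith, by linarith⟩
  · rw [hsqrt]
    exact le_min (by linarith) (by linarith)
end
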